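/- arXiv:1206.5402 — 3 statements merged into one kernel-verified Lean document; each statement's English description precedes it below -/
import Mathlib

section
/- Let m, n be positive integers and G = Z_m × Z_n with g_1, g_2 the generators of the two cyclic factors. For an integer 0 ≤ b < gcd(m,n) define Φ_b(g_1^i g_2^j, g_1^s g_2^t) = ζ_{gcd(m,n)}^{b·j·s} for 0 ≤ i, s < m and 0 ≤ j, t < n. Then each Φ_b is a normalized 2-cocycle on G with values in k^*, and every normalized 2-cocycle on G with values in k^* is cohomologous to Φ_b for exactly one integer b with 0 ≤ b < gcd(m,n). -/
/-- A 2-cochain `Φ : G × G → kˣ` (trivial action) is a 2-cocycle if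
`Φ(y,z)·Φ(xy,z)⁻¹·Φ(x,yz)·Φ(x,y)⁻¹ = 1` for all `x, y, z ∈ G`. -/
def Is2Cocycle {G : Type*} [AddGroup G] {k : Type*} [Field k]
    (Φ : G → G → kˣ) : Prop :=
  ∀ x y z : G, Φ y z * (Φ (x + y) z)⁻¹ * Φ x (y + z) * (Φ x y)⁻¹ = 1

/-- A 2-cochain is normalized if `Φ(x,1) = Φ(1,x) = 1` for all `x`. -/
def IsNormalized2Cochain {G : Type*} [AddGroup G] {k : Type*} [Field k]
    (Φ : G → G → kˣ) : Prop :=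
  ∀ x : G, Φ x 0 = 1 ∧ Φ 0 x = 1

/-- The 2-cochain `Φ_b(g₁^i g₂^j, g₁^s g₂^t) = ζ_{gcd(m,n)}^{b·j·s}` on `Z_m × Z_n`. -/
noncomputable def PhiB {k : Type*} [Field k] (m n : ℕ) (ζ : kˣ) (b : ℕ)
    (x y : ZMod m × ZMod n) : kˣ :=
  ζ ^ (b * x.2.val * y.1.val)

/-!
The alternating form `β(x, y) = Φ(x, y) / Φ(y, x)` of a normalized 2-cocycle `Φ` on an abelian
group is bimultiplicative, so on `Z_m × Z_n` it is determined by `β(g₂, g₁)`, an element killed by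
both `m` and `n`, hence a power `ζ^b` with `0 ≤ b < gcd(m, n)`; this `b` is a cohomology invariant
and `β(Φ_b) (g₂, g₁) = ζ^b`. Dividing `Φ` by `Φ_b` therefore leaves a symmetric cocycle, which
classifies an abelian extension of `G` by `kˣ`; that extension splits because `kˣ` is divisible
(`k` is algebraically closed), so the symmetric cocycle is a coboundary.
-/

section SymmetricCocycle

variable {G A : Type*} [AddCommGroup G] [AddCommGroup A]

structure IsSymmetricCocycle (Ψ : G → G → A) : Prop where
  cocycle : ∀ x y z, Ψ x y + Ψ (x + y) z = Ψ y z + Ψ x (y + z)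
  zero_left : ∀ x, Ψ 0 x = 0
  symm : ∀ x y, Ψ x y = Ψ y x

@[ext]
structure CocycleExtension (Ψ : G → G → A) where
  fiber : A
  base : G

variable {Ψ : G → G → A}

instance : Add (CocycleExtension Ψ) :=
  ⟨fun p q => ⟨p.fiber + q.fiber + Ψ p.base q.base, p.base + q.base⟩⟩

instance : Zero (CocycleExtension Ψ) := ⟨⟨0, 0⟩⟩

instance : Neg (CocycleExtension Ψ) := ⟨fun p => ⟨-p.fiber - Ψ p.base (-p.base), -p.base⟩⟩

namespace CocycleExtension

variable (p q : CocycleExtension Ψ)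

@[simp] theorem fiber_add : (p + q).fiber = p.fiber + q.fiber + Ψ p.base q.base := rfl
@[simp] theorem base_add : (p + q).base = p.base + q.base := rfl
@[simp] theorem fiber_zero : (0 : CocycleExtension Ψ).fiber = 0 := rfl
@[simp] theorem base_zero : (0 : CocycleExtension Ψ).base = 0 := rfl
@[simp] theorem fiber_neg : (-p).fiber = -p.fiber - Ψ p.base (-p.base) := rfl
@[simp] theorem base_neg : (-p).base = -p.base := rfl

end CocycleExtension

namespace IsSymmetricCocycle

variable (hΨ : IsSymmetricCocycle Ψ)
include hΨ

theorem zero_right (x : G) : Ψ x 0 = 0 := hΨ.symm x 0 ▸ hΨ.zero_left x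

abbrev addCommGroup : AddCommGroup (CocycleExtension Ψ) where
  add_assoc p q r := by
    ext
    · simp only [CocycleExtension.fiber_add, CocycleExtension.base_add]
      linear_combination (norm := abel) hΨ.cocycle p.base q.base r.base
    · exact add_assoc _ _ _
  zero_add p := by ext <;> simp [hΨ.zero_left]
  add_zero p := by ext <;> simp [hΨ.zero_right]
  neg_add_cancel p := by
    ext
    · simp only [CocycleExtension.fiber_add, CocycleExtension.fiber_neg, CocycleExtension.base_neg,
        hΨ.symm (-p.base), CocycleExtension.fiber_zero]
      abel
    · exact neg_add_cancel _
  add_comm p q := by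
    ext
    · simp only [CocycleExtension.fiber_add, hΨ.symm p.base, add_comm p.fiber]
    · exact add_comm _ _
  nsmul := nsmulRec
  zsmul := zsmulRec

/-- `Ext(G, A) = 0` for divisible `A`: the extension splits since `A` is an injective
`ℤ`-module, and a splitting `r` gives the primitive `x ↦ r (0, x)` of `Ψ`. -/
theorem exists_eq_coboundary [DivisibleBy A ℤ] :
    ∃ u : G → A, ∀ x y, Ψ x y = u x + u y - u (x + y) := by
  let := hΨ.addCommGroup
  let ι : A →+ CocycleExtension Ψ :=
    { toFun a := ⟨a, 0⟩
      map_zero' := rfl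
      map_add' a b := by ext <;> simp [hΨ.zero_left] }
  have hι : Function.Injective ι := fun a b h => congrArg CocycleExtension.fiber h
  obtain ⟨r, hr⟩ :=
    (Module.Baer.of_divisible A).extension_property_addMonoidHom ι hι (AddMonoidHom.id A)
  refine ⟨fun x => r ⟨0, x⟩, fun x y => eq_sub_of_add_eq ?_⟩
  have hsplit : (⟨0, x⟩ : CocycleExtension Ψ) + ⟨0, y⟩ = ι (Ψ x y) + ⟨0, x + y⟩ := by
    ext <;> simp [ι, hΨ.zero_left]
  have hr_split := congrArg r hsplit
  rwa [map_add, map_add, ← AddMonoidHom.comp_apply, hr, AddMonoidHom.id_apply, eq_comm]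
    at hr_split

end IsSymmetricCocycle

end SymmetricCocycle

section TwoCocycle

variable {k G : Type*} [Field k] {Φ Φ' : G → G → kˣ}

def commForm (Φ : G → G → kˣ) (x y : G) : kˣ := Φ x y / Φ y x

theorem commForm_swap (x y : G) : commForm Φ x y = (commForm Φ y x)⁻¹ :=
  (inv_div _ _).symm

theorem commForm_self (x : G) : commForm Φ x x = 1 := div_self' _

theorem commForm_div (x y : G) :
    commForm (fun x y => Φ x y / Φ' x y) x y = commForm Φ x y / commForm Φ' x y :=
  div_div_div_comm _ _ _ _

section AddGroup

variable [AddGroup G]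

theorem is2Cocycle_iff :
    Is2Cocycle Φ ↔ ∀ x y z, Φ x y * Φ (x + y) z = Φ y z * Φ x (y + z) := by
  refine forall₃_congr fun x y z => ?_
  rw [mul_inv_eq_one, mul_right_comm, mul_inv_eq_iff_eq_mul, eq_comm]

theorem Is2Cocycle.div (hΦ : Is2Cocycle Φ) (hΦ' : Is2Cocycle Φ') :
    Is2Cocycle fun x y => Φ x y / Φ' x y := by
  rw [is2Cocycle_iff] at *
  intro x y z
  rw [div_mul_div_comm, div_mul_div_comm, hΦ, hΦ']

theorem IsNormalized2Cochain.div (hΦ : IsNormalized2Cochain Φ) (hΦ' : IsNormalized2Cochain Φ') :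
    IsNormalized2Cochain fun x y => Φ x y / Φ' x y := fun x => by
  simp only [(hΦ x).1, (hΦ x).2, (hΦ' x).1, (hΦ' x).2, div_one, and_self]

theorem IsNormalized2Cochain.commForm_zero_right (hΦ₀ : IsNormalized2Cochain Φ) (x : G) :
    commForm Φ x 0 = 1 := by
  rw [commForm, (hΦ₀ x).1, (hΦ₀ x).2, div_one]

theorem IsNormalized2Cochain.commForm_zero_left (hΦ₀ : IsNormalized2Cochain Φ) (y : G) :
    commForm Φ 0 y = 1 := by
  rw [commForm, (hΦ₀ y).1, (hΦ₀ y).2, div_one]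

end AddGroup

noncomputable instance [IsAlgClosed k] : DivisibleBy (Additive kˣ) ℤ :=
  letI : DivisibleBy (Additive kˣ) ℕ := divisibleByOfSMulRightSurj _ _ fun {d} hd a => by
    obtain ⟨z, hz⟩ := IsAlgClosed.exists_pow_nat_eq (a.toMul : k) (Nat.pos_of_ne_zero hd)
    have hz0 : z ≠ 0 := by
      rintro rfl
      exact a.toMul.ne_zero (by rw [← hz, zero_pow hd])
    exact ⟨Additive.ofMul (Units.mk0 z hz0), show Units.mk0 z hz0 ^ d = a.toMul from
      Units.ext (by simpa using hz)⟩
  AddGroup.divisibleByIntOfDivisibleByNat _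

variable [AddCommGroup G]

theorem exists_eq_coboundary_of_symm [IsAlgClosed k] (hΦ : Is2Cocycle Φ)
    (hΦ₀ : IsNormalized2Cochain Φ) (hsymm : ∀ x y, Φ x y = Φ y x) :
    ∃ g : G → kˣ, ∀ x y, Φ x y = g y * (g (x + y))⁻¹ * g x := by
  have hΨ : IsSymmetricCocycle fun x y => Additive.ofMul (Φ x y) :=
    { cocycle := fun x y z => by rw [← ofMul_mul, ← ofMul_mul, is2Cocycle_iff.mp hΦ]
      zero_left := fun x => by rw [(hΦ₀ x).2, ofMul_one]
      symm := fun x y => by rw [hsymm] }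
  obtain ⟨u, hu⟩ := hΨ.exists_eq_coboundary
  refine ⟨fun x => (u x).toMul, fun x y => ?_⟩
  rw [← toMul_ofMul (Φ x y), hu, toMul_sub, toMul_add, mul_comm (u x).toMul, div_eq_mul_inv,
    mul_right_comm]

theorem commForm_eq_of_div_eq_coboundary {g : G → kˣ}
    (hg : ∀ x y, Φ x y / Φ' x y = g y * (g (x + y))⁻¹ * g x) (x y : G) :
    commForm Φ x y = commForm Φ' x y := by
  rw [← div_eq_one, ← commForm_div, commForm, div_eq_one, hg, hg, add_comm, mul_comm (g y),
    mul_comm (g x), mul_right_comm]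

theorem Is2Cocycle.commForm_add_right (hΦ : Is2Cocycle Φ) (x y z : G) :
    commForm Φ x (y + z) = commForm Φ x y * commForm Φ x z := by
  have h₁ := is2Cocycle_iff.mp hΦ x y z
  have h₂ := is2Cocycle_iff.mp hΦ y z x
  have h₃ := is2Cocycle_iff.mp hΦ y x z
  rw [add_comm z x] at h₂
  rw [add_comm y x] at h₃
  rw [commForm, commForm, commForm, div_mul_div_comm, div_eq_div_iff_mul_eq_mul]
  -- `kˣ` has no normalizing tactic, so the identity is checked in `k` after cancelling `Φ y z`
  refine mul_left_cancel (a := Φ y z) (Units.ext ?_)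
  simp only [Units.ext_iff, Units.val_mul] at h₁ h₂ h₃ ⊢
  linear_combination (↑(Φ y x) * ↑(Φ z x) : k) * h₁.symm - (↑(Φ x y) * ↑(Φ x z) : k) * h₂
    + (↑(Φ x y) * ↑(Φ z x) : k) * h₃

theorem Is2Cocycle.commForm_add_left (hΦ : Is2Cocycle Φ) (x y z : G) :
    commForm Φ (x + y) z = commForm Φ x z * commForm Φ y z := by
  rw [commForm_swap, hΦ.commForm_add_right, mul_inv, ← commForm_swap, ← commForm_swap]

theorem Is2Cocycle.commForm_nsmul_right (hΦ : Is2Cocycle Φ) (hΦ₀ : IsNormalized2Cochain Φ)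
    (x y : G) (d : ℕ) : commForm Φ x (d • y) = commForm Φ x y ^ d := by
  induction d with
  | zero => rw [zero_nsmul, pow_zero, hΦ₀.commForm_zero_right]
  | succ d ih => rw [succ_nsmul, hΦ.commForm_add_right, ih, pow_succ]

theorem Is2Cocycle.commForm_nsmul_left (hΦ : Is2Cocycle Φ) (hΦ₀ : IsNormalized2Cochain Φ)
    (x y : G) (d : ℕ) : commForm Φ (d • x) y = commForm Φ x y ^ d := by
  rw [commForm_swap, hΦ.commForm_nsmul_right hΦ₀, ← inv_pow, ← commForm_swap]

end TwoCocycle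

section ProdZMod

variable {k : Type*} [Field k] {m n : ℕ}

theorem ZMod.prod_eq_val_nsmul_add [NeZero m] [NeZero n] (x : ZMod m × ZMod n) :
    x = x.1.val • (1, 0) + x.2.val • (0, 1) := by
  ext <;> simp

theorem ZMod.val_add_modEq_of_dvd [NeZero m] {d : ℕ} (hd : d ∣ m) (a b : ZMod m) :
    (a + b).val ≡ a.val + b.val [MOD d] :=
  (ZMod.val_add a b ▸ Nat.mod_modEq _ m).of_dvd hd

theorem ZMod.val_one_modEq_of_dvd {d : ℕ} (hd : d ∣ m) : (1 : ZMod m).val ≡ 1 [MOD d] :=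
  (ZMod.val_one_eq_one_mod m ▸ Nat.mod_modEq 1 m).of_dvd hd

variable {Φ : ZMod m × ZMod n → ZMod m × ZMod n → kˣ}

theorem Is2Cocycle.commForm_generators_pow_gcd (hΦ : Is2Cocycle Φ)
    (hΦ₀ : IsNormalized2Cochain Φ) : commForm Φ (0, 1) (1, 0) ^ Nat.gcd m n = 1 := by
  refine pow_gcd_eq_one.mpr ⟨?_, ?_⟩
  · rw [← hΦ.commForm_nsmul_right hΦ₀, show m • ((1, 0) : ZMod m × ZMod n) = 0 by ext <;> simp,
      hΦ₀.commForm_zero_right]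
  · rw [← hΦ.commForm_nsmul_left hΦ₀, show n • ((0, 1) : ZMod m × ZMod n) = 0 by ext <;> simp,
      hΦ₀.commForm_zero_left]

theorem Is2Cocycle.symm_of_commForm_generators_eq_one [NeZero m] [NeZero n] (hΦ : Is2Cocycle Φ)
    (hΦ₀ : IsNormalized2Cochain Φ) (h : commForm Φ (0, 1) (1, 0) = 1) (x y : ZMod m × ZMod n) :
    Φ x y = Φ y x := by
  have h' : commForm Φ (1, 0) (0, 1) = 1 := by rw [commForm_swap, h, inv_one]
  have hgen : ∀ x, commForm Φ x (1, 0) = 1 ∧ commForm Φ x (0, 1) = 1 := fun x => by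
    rw [ZMod.prod_eq_val_nsmul_add x]
    simp only [hΦ.commForm_add_left, hΦ.commForm_nsmul_left hΦ₀, commForm_self, h, h', one_pow,
      mul_one, and_self]
  refine div_eq_one.mp ?_
  change commForm Φ x y = 1
  rw [ZMod.prod_eq_val_nsmul_add y, hΦ.commForm_add_right, hΦ.commForm_nsmul_right hΦ₀,
    hΦ.commForm_nsmul_right hΦ₀, (hgen x).1, (hgen x).2, one_pow, one_pow, one_mul]

variable {ζ : kˣ}

theorem phiB_is2Cocycle [NeZero m] [NeZero n] (hζ : ζ ^ Nat.gcd m n = 1) (b : ℕ) :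
    Is2Cocycle (PhiB m n ζ b) := by
  refine is2Cocycle_iff.mpr fun x y z => ?_
  simp only [PhiB, ← pow_add]
  refine pow_eq_pow_of_modEq ?_ hζ
  have h₁ := ZMod.val_add_modEq_of_dvd (Nat.gcd_dvd_left m n) y.1 z.1
  have h₂ := ZMod.val_add_modEq_of_dvd (Nat.gcd_dvd_right m n) x.2 y.2
  calc b * x.2.val * y.1.val + b * (x + y).2.val * z.1.val
      ≡ b * x.2.val * y.1.val + b * (x.2.val + y.2.val) * z.1.val [MOD Nat.gcd m n] :=
        Nat.ModEq.add_left _ ((h₂.mul_left b).mul_right _)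
    _ = b * y.2.val * z.1.val + b * x.2.val * (y.1.val + z.1.val) := by ring
    _ ≡ b * y.2.val * z.1.val + b * x.2.val * (y + z).1.val [MOD Nat.gcd m n] :=
        Nat.ModEq.add_left _ (h₁.symm.mul_left _)

theorem phiB_isNormalized2Cochain (b : ℕ) : IsNormalized2Cochain (PhiB m n ζ b) := fun x => by
  simp [PhiB]

theorem commForm_phiB_generators (hζ : ζ ^ Nat.gcd m n = 1) (b : ℕ) :
    commForm (PhiB m n ζ b) (0, 1) (1, 0) = ζ ^ b := by
  simp only [commForm, PhiB, ZMod.val_zero, mul_zero, pow_zero, div_one]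
  refine pow_eq_pow_of_modEq ?_ hζ
  simpa using ((ZMod.val_one_modEq_of_dvd (Nat.gcd_dvd_right m n)).mul_left b).mul
    (ZMod.val_one_modEq_of_dvd (Nat.gcd_dvd_left m n))

end ProdZMod

theorem statement6_general (k : Type*) [Field k] [IsAlgClosed k]
    (m n : ℕ) (hm : 0 < m) (hn : 0 < n)
    (ζ : kˣ) (hζ : IsPrimitiveRoot ζ (Nat.gcd m n)) :
    (∀ b : ℕ, b < Nat.gcd m n →
      Is2Cocycle (PhiB m n ζ b) ∧ IsNormalized2Cochain (PhiB m n ζ b)) ∧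
    (∀ Φ : ZMod m × ZMod n → ZMod m × ZMod n → kˣ,
      Is2Cocycle Φ → IsNormalized2Cochain Φ →
        ∃! b : ℕ, b < Nat.gcd m n ∧
          ∃ g : ZMod m × ZMod n → kˣ,
            ∀ x y : ZMod m × ZMod n,
              Φ x y / PhiB m n ζ b x y = g y * (g (x + y))⁻¹ * g x) := by
  have : NeZero m := ⟨hm.ne'⟩
  have : NeZero n := ⟨hn.ne'⟩
  have : NeZero (Nat.gcd m n) := ⟨(Nat.gcd_pos_of_pos_left n hm).ne'⟩
  have hζ₁ := hζ.pow_eq_one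
  refine ⟨fun b _ => ⟨phiB_is2Cocycle hζ₁ b, phiB_isNormalized2Cochain b⟩, fun Φ hΦ hΦ₀ => ?_⟩
  obtain ⟨b, hb, hζb⟩ := hζ.eq_pow_of_mem_rootsOfUnity
    ((mem_rootsOfUnity _ _).mpr (hΦ.commForm_generators_pow_gcd hΦ₀))
  refine ⟨b, ⟨hb, ?_⟩, fun b' ⟨hb', g, hg⟩ => hζ.pow_inj hb' hb ?_⟩
  · have hΨ := hΦ.div (phiB_is2Cocycle hζ₁ b)
    have hΨ₀ := hΦ₀.div (phiB_isNormalized2Cochain (ζ := ζ) b)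
    refine exists_eq_coboundary_of_symm hΨ hΨ₀ (hΨ.symm_of_commForm_generators_eq_one hΨ₀ ?_)
    rw [commForm_div, commForm_phiB_generators hζ₁, hζb, div_self']
  · rw [← commForm_phiB_generators hζ₁ b', ← commForm_eq_of_div_eq_coboundary hg, hζb]

/-- Each `Φ_b` (`0 ≤ b < gcd(m,n)`) is a normalized 2-cocycle on
`Z_m × Z_n` with values in `kˣ`, and every normalized 2-cocycle on `Z_m × Z_n` with values
in `kˣ` is cohomologous to `Φ_b` for exactly one `0 ≤ b < gcd(m,n)`. -/
theorem statement6 (k : Type*) [Field k] [IsAlgClosed k] [CharZero k]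
    (m n : ℕ) (hm : 0 < m) (hn : 0 < n)
    (ζ : kˣ) (hζ : IsPrimitiveRoot ζ (Nat.gcd m n)) :
    (∀ b : ℕ, b < Nat.gcd m n →
      Is2Cocycle (PhiB m n ζ b) ∧ IsNormalized2Cochain (PhiB m n ζ b)) ∧
    (∀ Φ : ZMod m × ZMod n → ZMod m × ZMod n → kˣ,
      Is2Cocycle Φ → IsNormalized2Cochain Φ →
        ∃! b : ℕ, b < Nat.gcd m n ∧
          ∃ g : ZMod m × ZMod n → kˣ,
            ∀ x y : ZMod m × ZMod n,
              Φ x y / PhiB m n ζ b x y = g y * (g (x + y))⁻¹ * g x) :=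
  statement6_general k m n hm hn ζ hζ
end

section
/- Let m, n be positive integers, G = Z_m × Z_n, and let 0 ≤ a < m, 0 ≤ b < gcd(m,n), 0 ≤ d < n be integers. Suppose r_{11}, r_{12}, r_{21}, r_{22} ∈ k^* satisfy r_{11}^m = ζ_m^a with ζ_m^{2a} = 1, r_{22}^n = ζ_n^d with ζ_n^{2d} = 1, r_{12}^n = 1, r_{12}^m = ζ_n^{−b}, r_{21}^n = 1 and r_{21}^m = ζ_n^{b}. Then the map R: G×G → k^* defined by R(g_1^i g_2^j, g_1^s g_2^t) = r_{11}^{is} · r_{12}^{it} · r_{21}^{js} · r_{22}^{jt} (for 0 ≤ i, s < m and 0 ≤ j, t < n) is a quasi-bicharacter on G with respect to Φ_{a,b,d}. -/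
/-- The 3-cocycle
`Φ_{a,b,d}(g₁^i g₂^j, g₁^s g₂^t, g₁^k g₂^l) = ζ_m^{a·i·[(s+k)/m]} · ζ_n^{b·j·[(s+k)/m]} · ζ_n^{d·j·[(t+l)/n]}`
on `Z_m × Z_n` (written additively), with values in `kˣ`. -/
noncomputable def PhiABD {k : Type*} [Field k] (m n : ℕ) (ζm ζn : kˣ) (a b d : ℕ)
    (x y z : ZMod m × ZMod n) : kˣ :=
  ζm ^ (a * x.1.val * ((y.1.val + z.1.val) / m)) *
    ζn ^ (b * x.2.val * ((y.1.val + z.1.val) / m)) *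
    ζn ^ (d * x.2.val * ((y.2.val + z.2.val) / n))

/-- `R : G × G → kˣ` is a quasi-bicharacter with respect to a (normalized 3-cocycle)
`Φ` if `R(xy,z) = R(x,z)·R(y,z)·Φ(z,x,y)·Φ(x,y,z)·Φ(x,z,y)⁻¹` and
`R(x,yz) = R(x,y)·R(x,z)·Φ(y,x,z)·Φ(y,z,x)⁻¹·Φ(x,y,z)⁻¹` for all `x, y, z ∈ G`. -/
def IsQuasiBicharacter {G : Type*} [AddCommGroup G] {k : Type*} [Field k]
    (Φ : G → G → G → kˣ) (R : G → G → kˣ) : Prop :=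
  (∀ x y z : G,
      R (x + y) z = R x z * R y z * (Φ z x y * Φ x y z * (Φ x z y)⁻¹)) ∧
  (∀ x y z : G,
      R x (y + z) = R x y * R x z * (Φ y x z * (Φ y z x)⁻¹ * (Φ x y z)⁻¹))

/-!
In `ZMod M` one has `(x + y).val = x.val + y.val - M * [(x.val + y.val) / M]`, so the map
`R(x, y) = ∏ r_{ij} ^ (x_i.val * y_j.val)` is bimultiplicative up to the powers `r_{ij}^m`,
`r_{ij}^n` raised to the carries `[(s + k)/m]`, `[(t + l)/n]`. The hypotheses on the `r_{ij}`
turn these correction terms into `Φ(x, y, z)` in the second variable and into `Φ(z, x, y)⁻¹` in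
the first one (`ζ_m^a` and `ζ_n^d` are their own inverses). Since `Φ(x, y, z)` is symmetric in
`y, z`, the remaining factors of the quasi-bicharacter identities cancel.
-/

section Carry

variable {G : Type*} [Monoid G] {M : ℕ} [NeZero M]

theorem pow_val_add_mul_mul_pow_carry (r : G) (x y : ZMod M) (u : ℕ) :
    r ^ ((x + y).val * u) * (r ^ M) ^ (u * ((x.val + y.val) / M)) =
      r ^ (x.val * u) * r ^ (y.val * u) := by
  rw [← pow_mul, ← pow_add, ← pow_add, ZMod.val_add]
  congr 1
  conv_rhs => rw [← add_mul, ← Nat.mod_add_div (x.val + y.val) M]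
  ring

theorem pow_mul_val_add_mul_pow_carry (r : G) (u : ℕ) (x y : ZMod M) :
    r ^ (u * (x + y).val) * (r ^ M) ^ (u * ((x.val + y.val) / M)) =
      r ^ (u * x.val) * r ^ (u * y.val) := by
  simpa only [mul_comm u] using pow_val_add_mul_mul_pow_carry r x y u

end Carry

section Pairing

variable {G : Type*} [CommMonoid G] {m n : ℕ}

def twistedPairing (r11 r12 r21 r22 : G) (x y : ZMod m × ZMod n) : G :=
  r11 ^ (x.1.val * y.1.val) * r12 ^ (x.1.val * y.2.val) *
    r21 ^ (x.2.val * y.1.val) * r22 ^ (x.2.val * y.2.val)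

variable [NeZero m] [NeZero n] (r11 r12 r21 r22 : G)

theorem twistedPairing_add_left_mul_carry (x y z : ZMod m × ZMod n) :
    twistedPairing r11 r12 r21 r22 (x + y) z *
        ((r11 ^ m) ^ (z.1.val * ((x.1.val + y.1.val) / m)) *
          (r12 ^ m) ^ (z.2.val * ((x.1.val + y.1.val) / m)) *
          (r21 ^ n) ^ (z.1.val * ((x.2.val + y.2.val) / n)) *
          (r22 ^ n) ^ (z.2.val * ((x.2.val + y.2.val) / n))) =
      twistedPairing r11 r12 r21 r22 x z * twistedPairing r11 r12 r21 r22 y z := by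
  have e11 := pow_val_add_mul_mul_pow_carry r11 x.1 y.1 z.1.val
  have e12 := pow_val_add_mul_mul_pow_carry r12 x.1 y.1 z.2.val
  have e21 := pow_val_add_mul_mul_pow_carry r21 x.2 y.2 z.1.val
  have e22 := pow_val_add_mul_mul_pow_carry r22 x.2 y.2 z.2.val
  unfold twistedPairing
  rw [Prod.fst_add, Prod.snd_add]
  set p := (x.1.val + y.1.val) / m
  set q := (x.2.val + y.2.val) / n
  calc
    _ = (r11 ^ ((x.1 + y.1).val * z.1.val) * (r11 ^ m) ^ (z.1.val * p)) *
          (r12 ^ ((x.1 + y.1).val * z.2.val) * (r12 ^ m) ^ (z.2.val * p)) *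
          (r21 ^ ((x.2 + y.2).val * z.1.val) * (r21 ^ n) ^ (z.1.val * q)) *
          (r22 ^ ((x.2 + y.2).val * z.2.val) * (r22 ^ n) ^ (z.2.val * q)) := by
      ac_rfl
    _ = _ := by rw [e11, e12, e21, e22]; ac_rfl

theorem twistedPairing_add_right_mul_carry (x y z : ZMod m × ZMod n) :
    twistedPairing r11 r12 r21 r22 x (y + z) *
        ((r11 ^ m) ^ (x.1.val * ((y.1.val + z.1.val) / m)) *
          (r12 ^ n) ^ (x.1.val * ((y.2.val + z.2.val) / n)) *
          (r21 ^ m) ^ (x.2.val * ((y.1.val + z.1.val) / m)) *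
          (r22 ^ n) ^ (x.2.val * ((y.2.val + z.2.val) / n))) =
      twistedPairing r11 r12 r21 r22 x y * twistedPairing r11 r12 r21 r22 x z := by
  have e11 := pow_mul_val_add_mul_pow_carry r11 x.1.val y.1 z.1
  have e12 := pow_mul_val_add_mul_pow_carry r12 x.1.val y.2 z.2
  have e21 := pow_mul_val_add_mul_pow_carry r21 x.2.val y.1 z.1
  have e22 := pow_mul_val_add_mul_pow_carry r22 x.2.val y.2 z.2
  unfold twistedPairing
  rw [Prod.fst_add, Prod.snd_add]
  set p := (y.1.val + z.1.val) / m
  set q := (y.2.val + z.2.val) / n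
  calc
    _ = (r11 ^ (x.1.val * (y.1 + z.1).val) * (r11 ^ m) ^ (x.1.val * p)) *
          (r12 ^ (x.1.val * (y.2 + z.2).val) * (r12 ^ n) ^ (x.1.val * q)) *
          (r21 ^ (x.2.val * (y.1 + z.1).val) * (r21 ^ m) ^ (x.2.val * p)) *
          (r22 ^ (x.2.val * (y.2 + z.2).val) * (r22 ^ n) ^ (x.2.val * q)) := by
      ac_rfl
    _ = _ := by rw [e11, e12, e21, e22]; ac_rfl

end Pairing

section Cocycle

variable {k : Type*} [Field k] {m n : ℕ} {ζm ζn : kˣ} {a b d : ℕ}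

theorem PhiABD_comm_right (x y z : ZMod m × ZMod n) :
    PhiABD m n ζm ζn a b d x y z = PhiABD m n ζm ζn a b d x z y := by
  rw [PhiABD, PhiABD, Nat.add_comm y.1.val, Nat.add_comm y.2.val]

theorem PhiABD_eq_pow (x y z : ZMod m × ZMod n) :
    PhiABD m n ζm ζn a b d x y z =
      (ζm ^ a) ^ (x.1.val * ((y.1.val + z.1.val) / m)) *
        (ζn ^ b) ^ (x.2.val * ((y.1.val + z.1.val) / m)) *
        (ζn ^ d) ^ (x.2.val * ((y.2.val + z.2.val) / n)) := by
  simp only [PhiABD, ← pow_mul, mul_assoc]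

variable [NeZero m] [NeZero n] {r11 r12 r21 r22 : kˣ}

theorem twistedPairing_add_left (h11 : r11 ^ m = ζm ^ a) (h11' : ζm ^ (2 * a) = 1)
    (h22 : r22 ^ n = ζn ^ d) (h22' : ζn ^ (2 * d) = 1)
    (h12m : r12 ^ m = (ζn ^ b)⁻¹) (h21n : r21 ^ n = 1) (x y z : ZMod m × ZMod n) :
    twistedPairing r11 r12 r21 r22 (x + y) z =
      twistedPairing r11 r12 r21 r22 x z * twistedPairing r11 r12 r21 r22 y z *
        PhiABD m n ζm ζn a b d z x y := by
  have hα : (ζm ^ a)⁻¹ = ζm ^ a :=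
    inv_eq_of_mul_eq_one_right (by rw [← pow_add, ← two_mul, h11'])
  have hδ : (ζn ^ d)⁻¹ = ζn ^ d :=
    inv_eq_of_mul_eq_one_right (by rw [← pow_add, ← two_mul, h22'])
  have key := twistedPairing_add_left_mul_carry r11 r12 r21 r22 x y z
  rw [h11, h12m, h21n, h22, one_pow, mul_one, ← hα, ← hδ] at key
  simp only [inv_pow, ← mul_inv] at key
  rw [← PhiABD_eq_pow] at key
  exact mul_inv_eq_iff_eq_mul.mp key

theorem twistedPairing_add_right (h11 : r11 ^ m = ζm ^ a) (h22 : r22 ^ n = ζn ^ d)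
    (h12n : r12 ^ n = 1) (h21m : r21 ^ m = ζn ^ b) (x y z : ZMod m × ZMod n) :
    twistedPairing r11 r12 r21 r22 x (y + z) =
      twistedPairing r11 r12 r21 r22 x y * twistedPairing r11 r12 r21 r22 x z *
        (PhiABD m n ζm ζn a b d x y z)⁻¹ := by
  rw [eq_mul_inv_iff_mul_eq, ← twistedPairing_add_right_mul_carry, h11, h12n, h21m, h22, one_pow,
    mul_one, PhiABD_eq_pow]

end Cocycle

theorem statement13_general (k : Type*) [Field k]
    (m n : ℕ) (hm : 0 < m) (hn : 0 < n)
    (ζm ζn : kˣ)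
    (a b d : ℕ)
    (r11 r12 r21 r22 : kˣ)
    (h11 : r11 ^ m = ζm ^ a) (h11' : ζm ^ (2 * a) = 1)
    (h22 : r22 ^ n = ζn ^ d) (h22' : ζn ^ (2 * d) = 1)
    (h12n : r12 ^ n = 1) (h12m : r12 ^ m = (ζn ^ b)⁻¹)
    (h21n : r21 ^ n = 1) (h21m : r21 ^ m = ζn ^ b) :
    IsQuasiBicharacter (PhiABD m n ζm ζn a b d)
      (fun x y : ZMod m × ZMod n =>
        r11 ^ (x.1.val * y.1.val) * r12 ^ (x.1.val * y.2.val) *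
          r21 ^ (x.2.val * y.1.val) * r22 ^ (x.2.val * y.2.val)) := by
  have : NeZero m := NeZero.of_pos hm
  have : NeZero n := NeZero.of_pos hn
  refine ⟨fun x y z => ?_, fun x y z => ?_⟩
  · rw [PhiABD_comm_right x z y, mul_inv_cancel_right]
    exact twistedPairing_add_left h11 h11' h22 h22' h12m h21n x y z
  · rw [PhiABD_comm_right y z x, mul_inv_cancel, one_mul]
    exact twistedPairing_add_right h11 h22 h12n h21m x y z

/-- If `r₁₁, r₁₂, r₂₁, r₂₂ ∈ kˣ` satisfy `r₁₁^m = ζ_m^a` with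
`ζ_m^{2a} = 1`, `r₂₂^n = ζ_n^d` with `ζ_n^{2d} = 1`, `r₁₂^n = 1`, `r₁₂^m = ζ_n^{−b}`,
`r₂₁^n = 1` and `r₂₁^m = ζ_n^{b}`, then
`R(g₁^i g₂^j, g₁^s g₂^t) = r₁₁^{is}·r₁₂^{it}·r₂₁^{js}·r₂₂^{jt}` is a quasi-bicharacter
on `Z_m × Z_n` with respect to `Φ_{a,b,d}`. -/
theorem statement13 (k : Type*) [Field k] [IsAlgClosed k] [CharZero k]
    (m n : ℕ) (hm : 0 < m) (hn : 0 < n)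
    (ζm ζn : kˣ) (hζm : IsPrimitiveRoot ζm m) (hζn : IsPrimitiveRoot ζn n)
    (a b d : ℕ) (ha : a < m) (hb : b < Nat.gcd m n) (hd : d < n)
    (r11 r12 r21 r22 : kˣ)
    (h11 : r11 ^ m = ζm ^ a) (h11' : ζm ^ (2 * a) = 1)
    (h22 : r22 ^ n = ζn ^ d) (h22' : ζn ^ (2 * d) = 1)
    (h12n : r12 ^ n = 1) (h12m : r12 ^ m = (ζn ^ b)⁻¹)
    (h21n : r21 ^ n = 1) (h21m : r21 ^ m = ζn ^ b) :
    IsQuasiBicharacter (PhiABD m n ζm ζn a b d)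
      (fun x y : ZMod m × ZMod n =>
        r11 ^ (x.1.val * y.1.val) * r12 ^ (x.1.val * y.2.val) *
          r21 ^ (x.2.val * y.1.val) * r22 ^ (x.2.val * y.2.val)) :=
  statement13_general k m n hm hn ζm ζn a b d r11 r12 r21 r22 h11 h11' h22 h22' h12n h12m h21n h21m
end

section
/- Let m, n be positive integers, G = Z_m × Z_n, and let 0 ≤ a < m, 0 ≤ b < gcd(m,n), 0 ≤ d < n be integers. Suppose r_{11}, r_{12}, r_{21}, r_{22} ∈ k^* satisfy r_{11}^m = ζ_m^a with ζ_m^{2a} = 1, r_{22}^n = ζ_n^d with ζ_n^{2d} = 1, r_{12}^n = 1, r_{12}^m = ζ_n^{−b}, r_{21}^n = 1 and r_{21}^m = ζ_n^{b}, and let R: G×G → k^* be the quasi-bicharacter with respect to Φ_{a,b,d} given by R(g_1^i g_2^j, g_1^s g_2^t) = r_{11}^{is} · r_{12}^{it} · r_{21}^{js} · r_{22}^{jt} (for 0 ≤ i, s < m and 0 ≤ j, t < n). Then R is skew-symmetric, i.e., R(x,y)·R(y,x) = 1 for all x, y ∈ G, if and only if r_{11}^2 = 1, r_{22}^2 = 1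 and r_{12}·r_{21} = 1. -/
/-!
Writing `(i, j)` and `(s, t)` for the coordinates of `x` and `y`, one has
`R(x,y)·R(y,x) = (r₁₁²)^{is} · (r₁₂r₂₁)^{it+js} · (r₂₂²)^{jt}`, so the three conditions make `R`
skew-symmetric. Conversely, evaluating at pairs of generators gives
`(r₁₁²)^{v²} = (r₂₂²)^{w²} = (r₁₂r₂₁)^{vw} = 1` with `v = (1 : ZMod m).val` and
`w = (1 : ZMod n).val`. The hypotheses give `(r₁₁²)^m = (r₂₂²)^n = (r₁₂r₂₁)^m = (r₁₂r₂₁)^n = 1`,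
and as `v ≡ 1 (mod m)`, `w ≡ 1 (mod n)` the exponents `v`, `w` may be replaced by `1`; this
matters when `m = 1` or `n = 1`, where `v = 0` or `w = 0`.
-/

theorem sq_pow_eq_one_of_pow_eq {M : Type*} [CommMonoid M] {r ζ : M} {m a : ℕ}
    (hr : r ^ m = ζ ^ a) (hζ : ζ ^ (2 * a) = 1) : (r ^ 2) ^ m = 1 := by
  rw [← pow_mul, mul_comm, pow_mul, hr, ← pow_mul, mul_comm, hζ]

theorem pow_val_one_of_pow_eq_one {M : Type*} [Monoid M] {x : M} {m : ℕ} (hx : x ^ m = 1) :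
    x ^ (1 : ZMod m).val = x := by
  rw [ZMod.val_one_eq_one_mod, ← pow_eq_pow_mod 1 hx, pow_one]

section SkewProduct

variable {M : Type*} [CommMonoid M] {m n : ℕ} {r11 r12 r21 r22 : M}
  {R : ZMod m × ZMod n → ZMod m × ZMod n → M}

theorem mul_swap_eq_of_eq_pow
    (hR : ∀ x y : ZMod m × ZMod n,
      R x y = r11 ^ (x.1.val * y.1.val) * r12 ^ (x.1.val * y.2.val) *
        r21 ^ (x.2.val * y.1.val) * r22 ^ (x.2.val * y.2.val))
    (x y : ZMod m × ZMod n) :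
    R x y * R y x = (r11 ^ 2) ^ (x.1.val * y.1.val) *
      (r12 * r21) ^ (x.1.val * y.2.val + x.2.val * y.1.val) * (r22 ^ 2) ^ (x.2.val * y.2.val) := by
  rw [hR, hR, Nat.mul_comm y.1.val, Nat.mul_comm y.1.val, Nat.mul_comm y.2.val,
    Nat.mul_comm y.2.val]
  simp only [sq, mul_pow, pow_add]
  ac_rfl

end SkewProduct

theorem statement16_general (k : Type*) [Field k]
    (m n : ℕ)
    (ζm ζn : kˣ)
    (a b d : ℕ)
    (r11 r12 r21 r22 : kˣ)
    (h11 : r11 ^ m = ζm ^ a) (h11' : ζm ^ (2 * a) = 1)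
    (h22 : r22 ^ n = ζn ^ d) (h22' : ζn ^ (2 * d) = 1)
    (h12n : r12 ^ n = 1) (h12m : r12 ^ m = (ζn ^ b)⁻¹)
    (h21n : r21 ^ n = 1) (h21m : r21 ^ m = ζn ^ b)
    (R : ZMod m × ZMod n → ZMod m × ZMod n → kˣ)
    (hRdef : ∀ x y : ZMod m × ZMod n,
      R x y = r11 ^ (x.1.val * y.1.val) * r12 ^ (x.1.val * y.2.val) *
        r21 ^ (x.2.val * y.1.val) * r22 ^ (x.2.val * y.2.val)) :
    (∀ x y : ZMod m × ZMod n, R x y * R y x = 1) ↔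
      (r11 ^ 2 = 1 ∧ r22 ^ 2 = 1 ∧ r12 * r21 = 1) := by
  have h11m := sq_pow_eq_one_of_pow_eq h11 h11'
  have h22n := sq_pow_eq_one_of_pow_eq h22 h22'
  have hcm : (r12 * r21) ^ m = 1 := by rw [mul_pow, h12m, h21m, inv_mul_cancel]
  have hcn : (r12 * r21) ^ n = 1 := by rw [mul_pow, h12n, h21n, mul_one]
  simp only [mul_swap_eq_of_eq_pow hRdef]
  constructor
  · intro h
    refine ⟨?_, ?_, ?_⟩
    · simpa [pow_mul, pow_val_one_of_pow_eq_one h11m] using h (1, 0) (1, 0)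
    · simpa [pow_mul, pow_val_one_of_pow_eq_one h22n] using h (0, 1) (0, 1)
    · simpa [pow_mul, pow_val_one_of_pow_eq_one hcm, pow_val_one_of_pow_eq_one hcn]
        using h (1, 0) (0, 1)
  · rintro ⟨h11sq, h22sq, hc⟩ x y
    rw [h11sq, h22sq, hc, one_pow, one_pow, one_pow, mul_one, mul_one]

/-- Let `r₁₁, r₁₂, r₂₁, r₂₂ ∈ kˣ` satisfy the conditions of equation
(3.14) and let `R(g₁^i g₂^j, g₁^s g₂^t) = r₁₁^{is}·r₁₂^{it}·r₂₁^{js}·r₂₂^{jt}` be the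
corresponding quasi-bicharacter with respect to `Φ_{a,b,d}`.  Then `R` is
skew-symmetric, i.e. `R(x,y)·R(y,x) = 1` for all `x, y`, if and only if `r₁₁² = 1`,
`r₂₂² = 1` and `r₁₂·r₂₁ = 1`. -/
theorem statement16 (k : Type*) [Field k] [IsAlgClosed k] [CharZero k]
    (m n : ℕ) (hm : 0 < m) (hn : 0 < n)
    (ζm ζn : kˣ) (hζm : IsPrimitiveRoot ζm m) (hζn : IsPrimitiveRoot ζn n)
    (a b d : ℕ) (ha : a < m) (hb : b < Nat.gcd m n) (hd : d < n)
    (r11 r12 r21 r22 : kˣ)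
    (h11 : r11 ^ m = ζm ^ a) (h11' : ζm ^ (2 * a) = 1)
    (h22 : r22 ^ n = ζn ^ d) (h22' : ζn ^ (2 * d) = 1)
    (h12n : r12 ^ n = 1) (h12m : r12 ^ m = (ζn ^ b)⁻¹)
    (h21n : r21 ^ n = 1) (h21m : r21 ^ m = ζn ^ b)
    (R : ZMod m × ZMod n → ZMod m × ZMod n → kˣ)
    (hRdef : ∀ x y : ZMod m × ZMod n,
      R x y = r11 ^ (x.1.val * y.1.val) * r12 ^ (x.1.val * y.2.val) *
        r21 ^ (x.2.val * y.1.val) * r22 ^ (x.2.val * y.2.val))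
    (hR : IsQuasiBicharacter (PhiABD m n ζm ζn a b d) R) :
    (∀ x y : ZMod m × ZMod n, R x y * R y x = 1) ↔
      (r11 ^ 2 = 1 ∧ r22 ^ 2 = 1 ∧ r12 * r21 = 1) :=
  statement16_general k m n ζm ζn a b d r11 r12 r21 r22 h11 h11' h22 h22' h12n h12m h21n h21m R
    hRdef
end
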